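/- Let n ≥ 8 and let G be the complete bipartite graph K_{ℓ, n−ℓ} with n/2 ≤ ℓ ≤ n − 4. Then sdiam_3(G) = 3, Δ(G) = ℓ, and e(G) = ℓ(n − ℓ); consequently e_3(n, ℓ, 3) ≤ ℓ(n − ℓ), where e_3(n, ℓ, d) is the minimum number of edges of a graph of order n with maximum degree ℓ and Steiner 3-diameter at most d. -/

import Mathlib

open SimpleGraph

/-- The Steiner distance of a vertex set `S` in a graph `G`: the minimum number of edges
of a connected subgraph of `G` whose vertex set contains `S`. -/
noncomputable def steinerDist {V : Type*} (G : SimpleGraph V) (S : Set V) : ℕ :=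
  sInf {m : ℕ | ∃ H : G.Subgraph, H.Connected ∧ S ⊆ H.verts ∧ H.edgeSet.ncard = m}

/-- The Steiner `k`-diameter of `G`: the maximum Steiner distance over all `k`-element
vertex subsets. -/
noncomputable def sdiam {V : Type*} [Fintype V] (G : SimpleGraph V) (k : ℕ) : ℕ :=
  sSup {m : ℕ | ∃ S : Finset V, S.card = k ∧ steinerDist G ↑S = m}

/-- The maximum degree of `G`. -/
noncomputable def maxDeg {V : Type*} [Fintype V] (G : SimpleGraph V) : ℕ :=
  Finset.univ.sup fun v => (G.neighborSet v).ncard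

/-- The minimum degree of `G`. -/
noncomputable def minDeg {V : Type*} [Fintype V] (G : SimpleGraph V) : ℕ :=
  sInf {d : ℕ | ∃ v : V, (G.neighborSet v).ncard = d}

/-- `e3 n ℓ d` : minimum number of edges of a graph of order `n` with maximum degree `ℓ`
and Steiner 3-diameter at most `d` (`⊤` if no such graph exists). -/
noncomputable def e3 (n ℓ d : ℕ) : ℕ∞ :=
  sInf {m : ℕ∞ | ∃ G : SimpleGraph (Fin n),
    maxDeg G = ℓ ∧ sdiam G 3 ≤ d ∧ (G.edgeSet.ncard : ℕ∞) = m}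

/-! Any three vertices of a complete bipartite graph with both sides nonempty lie in a star with
at most three edges, centred at a vertex whose colour occurs at most once among them. Conversely,
a connected subgraph containing three vertices of one side needs a separate edge at each of them,
since no two of them are adjacent. Hence `sdiam₃ = 3` as soon as one side has three vertices; the
degree and edge counts are read off the sides, and relabelling the vertices by `Fin n` gives the
bound on `e3`. -/

open Finset

namespace SimpleGraph

variable {V : Type*} {G : SimpleGraph V}

namespace Subgraph

def star (w : V) (N : Set V) (hN : ∀ v ∈ N, G.Adj w v) : G.Subgraph where
  verts := insert w N
  Adj a b := a = w ∧ b ∈ N ∨ b = w ∧ a ∈ N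
  adj_sub := by
    rintro a b (⟨rfl, hb⟩ | ⟨rfl, ha⟩)
    exacts [hN b hb, (hN a ha).symm]
  edge_vert := by
    rintro a b (⟨rfl, -⟩ | ⟨-, ha⟩)
    exacts [Set.mem_insert _ _, Set.mem_insert_of_mem _ ha]
  symm := ⟨fun _ _ => Or.symm⟩

variable {w : V} {N : Set V} {hN : ∀ v ∈ N, G.Adj w v}

theorem star_connected : (star w N hN).Connected := by
  have hw : w ∈ (star w N hN).verts := Set.mem_insert _ _
  have hreach : ∀ v : (star w N hN).verts, (star w N hN).coe.Reachable ⟨w, hw⟩ v := by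
    rintro ⟨v, rfl | hv⟩
    · rfl
    · exact Adj.reachable (G := (star w N hN).coe) (Or.inl ⟨rfl, hv⟩)
  rw [Subgraph.connected_iff', connected_iff]
  exact ⟨fun u v => (hreach u).symm.trans (hreach v), ⟨⟨w, hw⟩⟩⟩

theorem edgeSet_star_subset : (star w N hN).edgeSet ⊆ (fun v => s(w, v)) '' N := by
  rintro ⟨a, b⟩ (⟨rfl, hb⟩ | ⟨rfl, ha⟩)
  exacts [⟨b, hb, rfl⟩, ⟨a, ha, Sym2.eq_swap⟩]

/-- Each vertex of `S` has an edge of `H` at it, and independence makes these edges distinct. -/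
theorem Connected.card_le_ncard_edgeSet [Finite V] {H : G.Subgraph} (hH : H.Connected)
    {S : Finset V} (hSH : ↑S ⊆ H.verts) (hS : G.IsIndepSet ↑S) (hcard : 1 < #S) :
    #S ≤ H.edgeSet.ncard := by
  have : Nontrivial H.verts :=
    Set.nontrivial_coe_sort.mpr ((one_lt_card_iff_nontrivial.mp hcard).mono hSH)
  have hnbr : ∀ x ∈ S, ∃ v, H.Adj x v := fun x hx =>
    hH.preconnected.exists_adj_of_nontrivial ⟨x, hSH hx⟩
  choose! f hf using hnbr
  rw [← Set.ncard_coe_finset]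
  refine Set.ncard_le_ncard_of_injOn (fun x => s(x, f x)) hf ?_ (Set.toFinite _)
  intro x hx y hy hxy
  by_contra hne
  rcases Sym2.eq_iff.mp hxy with ⟨rfl, -⟩ | ⟨rfl, -⟩
  · exact hne rfl
  · exact hS hx hy hne (H.adj_sub (hf y hy)).symm

end Subgraph

theorem steinerDist_le_of_connected {H : G.Subgraph} (hH : H.Connected) {S : Set V}
    (hS : S ⊆ H.verts) : steinerDist G S ≤ H.edgeSet.ncard :=
  Nat.sInf_le ⟨H, hH, hS, rfl⟩

theorem card_le_steinerDist [Finite V] {S : Finset V} (hS : G.IsIndepSet ↑S) (hcard : 1 < #S)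
    (hconn : ∃ H : G.Subgraph, H.Connected ∧ ↑S ⊆ H.verts) : #S ≤ steinerDist G ↑S := by
  obtain ⟨H₀, hH₀, hSH₀⟩ := hconn
  refine le_csInf ⟨_, H₀, hH₀, hSH₀, rfl⟩ ?_
  rintro _ ⟨H, hH, hSH, rfl⟩
  exact hH.card_le_ncard_edgeSet hSH hS hcard

theorem sdiam_le [Fintype V] {k d : ℕ}
    (h : ∀ S : Finset V, #S = k → steinerDist G ↑S ≤ d) : sdiam G k ≤ d :=
  csSup_le' (by rintro _ ⟨S, hS, rfl⟩; exact h S hS)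

theorem steinerDist_le_sdiam [Fintype V] (S : Finset V) : steinerDist G ↑S ≤ sdiam G #S :=
  le_csSup ((Set.finite_range fun S : Finset V => steinerDist G ↑S).subset
    (by rintro _ ⟨S, -, rfl⟩; exact ⟨S, rfl⟩)).bddAbove ⟨S, rfl, rfl⟩

/-- The complete bipartite graph with sides `p ⁻¹' {true}` and `p ⁻¹' {false}`. -/
def completeBipartiteOf (p : V → Bool) : SimpleGraph V := (⊤ : SimpleGraph Bool).comap p

variable {p : V → Bool}

@[simp]
theorem completeBipartiteOf_adj {u v : V} : (completeBipartiteOf p).Adj u v ↔ p u ≠ p v := by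
  simp [completeBipartiteOf]

theorem completeBipartiteGraph_eq_completeBipartiteOf (α β : Type*) :
    completeBipartiteGraph α β = completeBipartiteOf Sum.isLeft := by
  ext u v
  cases u <;> cases v <;> simp

theorem isIndepSet_completeBipartiteOf {S : Set V} {b : Bool} (hS : ∀ v ∈ S, p v = b) :
    (completeBipartiteOf p).IsIndepSet S := by
  intro u hu v hv _
  simp [hS u hu, hS v hv]

/-- If some colour occurs at most once in `S`, a vertex of that colour (in `S` if possible)
sees the rest of `S`. -/
theorem exists_forall_eq_or_ne_of_card_le_three (hp : Function.Surjective p) {S : Finset V}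
    (hS : #S ≤ 3) : ∃ w, ∀ v ∈ S, v = w ∨ p v ≠ p w := by
  obtain ⟨b, hb⟩ : ∃ b, #(S.filter (p · = b)) ≤ 1 := by
    have hsplit := card_filter_add_card_filter_not (s := S) (p · = true)
    simp only [Bool.not_eq_true] at hsplit
    by_contra! h
    have := h true
    have := h false
    omega
  rcases (S.filter (p · = b)).eq_empty_or_nonempty with hempty | ⟨w, hw⟩
  · obtain ⟨w, rfl⟩ := hp b
    exact ⟨w, fun v hv => Or.inr fun h => (filter_eq_empty_iff.mp hempty) hv h⟩
  · refine ⟨w, fun v hv => or_iff_not_imp_right.mpr fun h => ?_⟩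
    have hvb : v ∈ S.filter (p · = b) :=
      mem_filter.mpr ⟨hv, by rw [not_not.mp h, (mem_filter.mp hw).2]⟩
    exact card_le_one.mp hb v hvb w hw

theorem exists_connected_subgraph_completeBipartiteOf (hp : Function.Surjective p)
    {S : Finset V} (hS : #S ≤ 3) : ∃ H : (completeBipartiteOf p).Subgraph,
      H.Connected ∧ ↑S ⊆ H.verts ∧ H.edgeSet.ncard ≤ #S := by
  obtain ⟨w, hw⟩ := exists_forall_eq_or_ne_of_card_le_three hp hS
  set N := S.filter (p · ≠ p w)
  have hN : ∀ v ∈ (N : Set V), (completeBipartiteOf p).Adj w v := by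
    intro v hv
    exact completeBipartiteOf_adj.mpr (mem_filter.mp hv).2.symm
  refine ⟨Subgraph.star w N hN, Subgraph.star_connected, fun v hv => ?_, ?_⟩
  · rcases hw v hv with rfl | hne
    exacts [Set.mem_insert _ _, Set.mem_insert_of_mem _ (mem_filter.mpr ⟨hv, hne⟩)]
  · calc (Subgraph.star w N hN).edgeSet.ncard
        ≤ ((fun v => s(w, v)) '' (N : Set V)).ncard :=
          Set.ncard_le_ncard Subgraph.edgeSet_star_subset ((N.finite_toSet).image _)
      _ ≤ #N := (Set.ncard_image_le N.finite_toSet).trans (Set.ncard_coe_finset N).le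
      _ ≤ #S := card_filter_le _ _

variable [Fintype V]

theorem sdiam_three_completeBipartiteOf (hp : Function.Surjective p) {b : Bool}
    (h3 : 3 ≤ #{v | p v = b}) : sdiam (completeBipartiteOf p) 3 = 3 := by
  refine le_antisymm (sdiam_le fun S hS => ?_) ?_
  · obtain ⟨H, hH, hSH, hcard⟩ := exists_connected_subgraph_completeBipartiteOf hp hS.le
    exact (steinerDist_le_of_connected hH hSH).trans (hS ▸ hcard)
  · obtain ⟨S, hSb, hS⟩ := exists_subset_card_eq h3
    obtain ⟨H, hH, hSH, -⟩ := exists_connected_subgraph_completeBipartiteOf hp hS.le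
    have hind : (completeBipartiteOf p).IsIndepSet ↑S :=
      isIndepSet_completeBipartiteOf fun v hv => (mem_filter.mp (hSb hv)).2
    calc 3 = #S := hS.symm
      _ ≤ steinerDist (completeBipartiteOf p) ↑S :=
        card_le_steinerDist hind (by omega) ⟨H, hH, hSH⟩
      _ ≤ sdiam (completeBipartiteOf p) 3 := hS ▸ steinerDist_le_sdiam S

theorem ncard_neighborSet_completeBipartiteOf (v : V) :
    ((completeBipartiteOf p).neighborSet v).ncard = #{w | p w = !p v} := by
  rw [← Set.ncard_coe_finset]
  congr 1
  ext w
  simp [eq_comm (a := p w), Bool.eq_not]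

theorem maxDeg_completeBipartiteOf (hp : Function.Surjective p) :
    maxDeg (completeBipartiteOf p) = max #{v | p v = true} #{v | p v = false} := by
  have hle : ∀ b, #{v | p v = b} ≤ maxDeg (completeBipartiteOf p) := by
    intro b
    obtain ⟨v, hv⟩ := hp (!b)
    have := Finset.le_sup (f := fun v => ((completeBipartiteOf p).neighborSet v).ncard)
      (mem_univ v)
    rwa [ncard_neighborSet_completeBipartiteOf, hv, Bool.not_not] at this
  refine le_antisymm (Finset.sup_le fun v _ => ?_) (max_le (hle true) (hle false))
  rw [ncard_neighborSet_completeBipartiteOf]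
  cases p v
  exacts [le_max_left _ _, le_max_right _ _]

theorem ncard_edgeSet_completeBipartiteOf :
    (completeBipartiteOf p).edgeSet.ncard = #{v | p v = true} * #{v | p v = false} := by
  classical
  have hdeg : ∀ v, (completeBipartiteOf p).degree v = #{w | p w = !p v} := fun v => by
    rw [← ncard_neighborSet_completeBipartiteOf, ← card_neighborFinset_eq_degree,
      neighborFinset_def, Set.ncard_eq_toFinset_card']
  have hfibre : ∀ b, ∑ v with p v = b, (completeBipartiteOf p).degree v =
      #{v | p v = b} * #{w | p w = !b} := fun b => by
    rw [sum_congr rfl fun v hv => by rw [hdeg, (mem_filter.mp hv).2], sum_const, smul_eq_mul]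
  have hsum := (completeBipartiteOf p).sum_degrees_eq_twice_card_edges
  rw [← sum_fiberwise univ p, Fintype.sum_bool, hfibre, hfibre, Bool.not_true,
    Bool.not_false] at hsum
  rw [← coe_edgeFinset, Set.ncard_coe_finset]
  linarith [mul_comm #{v | p v = true} #{v | p v = false}]

end SimpleGraph

theorem Sum.card_filter_isLeft_eq_true {α β : Type*} [Fintype α] [Fintype β] :
    #{v : α ⊕ β | v.isLeft = true} = Fintype.card α := by
  rw [card_filter, Fintype.sum_sum_type]
  simp

theorem Sum.card_filter_isLeft_eq_false {α β : Type*} [Fintype α] [Fintype β] :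
    #{v : α ⊕ β | v.isLeft = false} = Fintype.card β := by
  rw [card_filter, Fintype.sum_sum_type]
  simp

theorem stmt14 (n ℓ : ℕ) (hn : 8 ≤ n) (hl1 : n ≤ 2 * ℓ) (hl2 : ℓ ≤ n - 4) :
    sdiam (completeBipartiteGraph (Fin ℓ) (Fin (n - ℓ))) 3 = 3 ∧
    maxDeg (completeBipartiteGraph (Fin ℓ) (Fin (n - ℓ))) = ℓ ∧
    (completeBipartiteGraph (Fin ℓ) (Fin (n - ℓ))).edgeSet.ncard = ℓ * (n - ℓ) ∧
    e3 n ℓ 3 ≤ (ℓ * (n - ℓ) : ℕ) := by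
  rw [completeBipartiteGraph_eq_completeBipartiteOf]
  set p : Fin ℓ ⊕ Fin (n - ℓ) → Bool := Sum.isLeft
  have hp : Function.Surjective p := by
    rintro (_ | _)
    exacts [⟨.inr ⟨0, by omega⟩, rfl⟩, ⟨.inl ⟨0, by omega⟩, rfl⟩]
  have hT : #{v | p v = true} = ℓ := Sum.card_filter_isLeft_eq_true.trans (Fintype.card_fin ℓ)
  have hF : #{v | p v = false} = n - ℓ :=
    Sum.card_filter_isLeft_eq_false.trans (Fintype.card_fin _)
  let e : Fin ℓ ⊕ Fin (n - ℓ) ≃ Fin n := finSumFinEquiv.trans (finCongr (by omega))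
  have he : ∀ b, #{v | (p ∘ e.symm) v = b} = #{v | p v = b} := fun b =>
    card_equiv e.symm (by simp)
  refine ⟨sdiam_three_completeBipartiteOf hp (b := true) (by omega), ?_,
    by rw [ncard_edgeSet_completeBipartiteOf, hT, hF], ?_⟩
  · rw [maxDeg_completeBipartiteOf hp, hT, hF]
    omega
  · refine sInf_le ⟨completeBipartiteOf (p ∘ e.symm), ?_, ?_, ?_⟩
    · rw [maxDeg_completeBipartiteOf (hp.comp e.symm.surjective), he, he, hT, hF]
      omega
    · rw [sdiam_three_completeBipartiteOf (hp.comp e.symm.surjective) (b := true)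
        (by rw [he]; omega)]
    · rw [ncard_edgeSet_completeBipartiteOf, he, he, hT, hF]
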